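/- arXiv:1810.09281 — 2 statements merged into one kernel-verified Lean document; each statement's English description precedes it below -/
import Mathlib

section
/- Fix s ∈ (3/4, 1) and a, b, S > 0, and define K̃(t) = aS + bS²t^{3−2s} − t^{2s} for t > 0. Then there exists a unique T > 0 such that K̃(T) = 0, K̃(t) > 0 for all t ∈ (0, T), and K̃(t) < 0 for all t > T. Consequently, T is the unique maximum point on (0, ∞) of the function K(t) = (aS/2)t^{3−2s} + (bS²/4)t^{6−4s} − ((3−2s)/6)t³, whose derivative satisfies K′(t) = ((3−2s)/2) t^{2−2s} K̃(t). -/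
open MeasureTheory Real Set Filter Topology

noncomputable section

abbrev R3 : Type := EuclideanSpace ℝ (Fin 3)

/-- Squared Gagliardo seminorm `[u]_s²`. -/
def gagSq (s : ℝ) (u : R3 → ℝ) : ℝ :=
  ∫ p : R3 × R3, (u p.1 - u p.2) ^ 2 / ‖p.1 - p.2‖ ^ (3 + 2 * s)

/-- Gagliardo bilinear form. -/
def gagForm (s : ℝ) (u v : R3 → ℝ) : ℝ :=
  ∫ p : R3 × R3, (u p.1 - u p.2) * (v p.1 - v p.2) / ‖p.1 - p.2‖ ^ (3 + 2 * s)

/-- Membership in `H^s(ℝ³)`. -/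
def MemHs (s : ℝ) (u : R3 → ℝ) : Prop :=
  MemLp u 2 volume ∧
    Integrable (fun p : R3 × R3 => (u p.1 - u p.2) ^ 2 / ‖p.1 - p.2‖ ^ (3 + 2 * s))

/-- Squared `H^s` norm. -/
def hsNormSq (s : ℝ) (u : R3 → ℝ) : ℝ := gagSq s u + ∫ x : R3, u x ^ 2

/-- The fractional critical exponent `2*_s = 6/(3-2s)`. -/
def pc (s : ℝ) : ℝ := 6 / (3 - 2 * s)

/-- The primitive `F(t) = ∫₀ᵗ f`. -/
def prim (f : ℝ → ℝ) (t : ℝ) : ℝ := ∫ τ in (0:ℝ)..t, f τ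

/-- Hypotheses (f1)-(f4) together with continuity and vanishing for `t ≤ 0`. -/
def Hf (s : ℝ) (f : ℝ → ℝ) (q σ C₀ ϑ : ℝ) : Prop :=
  Continuous f ∧ (∀ t ≤ (0:ℝ), f t = 0) ∧
  Tendsto (fun t => f t / t ^ (3:ℕ)) (𝓝[>] 0) (𝓝 0) ∧
  (q ∈ Ioo (4:ℝ) (pc s) ∧ σ ∈ Ioo (4:ℝ) (pc s) ∧ 0 < C₀ ∧
    (∀ t > (0:ℝ), C₀ * t ^ (q - 1) ≤ f t) ∧
    Tendsto (fun t => f t / t ^ (σ - 1)) atTop (𝓝 0)) ∧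
  (ϑ ∈ Ioo (4:ℝ) (pc s) ∧ ∀ t > (0:ℝ), 0 < ϑ * prim f t ∧ ϑ * prim f t ≤ t * f t) ∧
  StrictMonoOn (fun t => f t / t ^ (3:ℕ)) (Ioi 0)

/-- Hypotheses (V1)-(V2) on the potential. -/
def HV (V : R3 → ℝ) (V₁ : ℝ) (Λ : Set R3) (V₀ : ℝ) : Prop :=
  Continuous V ∧ IsGLB (range V) V₁ ∧ 0 < V₁ ∧
  IsOpen Λ ∧ Bornology.IsBounded Λ ∧ Λ.Nonempty ∧
  IsGLB (V '' Λ) V₀ ∧ 0 < V₀ ∧ ∀ x ∈ frontier Λ, V₀ < V x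

/-- Truncated nonlinearity `f̃`. -/
def ftil (s V₁ K a₀ : ℝ) (f : ℝ → ℝ) (t : ℝ) : ℝ :=
  if t ≤ a₀ then f t + max t 0 ^ (pc s - 1) else V₁ / K * t

/-- Penalized nonlinearity `g(x,t)`. -/
def gpen (s V₁ K a₀ : ℝ) (f : ℝ → ℝ) (Λ : Set R3) (x : R3) (t : ℝ) : ℝ :=
  if t ≤ 0 then 0
  else Λ.indicator (fun _ => f t + max t 0 ^ (pc s - 1)) x
    + (1 - Λ.indicator (fun _ => (1:ℝ)) x) * ftil s V₁ K a₀ f t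

/-- Primitive `G(x,t) = ∫₀ᵗ g(x,τ) dτ`. -/
def Gpen (s V₁ K a₀ : ℝ) (f : ℝ → ℝ) (Λ : Set R3) (x : R3) (t : ℝ) : ℝ :=
  ∫ τ in (0:ℝ)..t, gpen s V₁ K a₀ f Λ x τ

/-- Membership in the space `H_ε`. -/
def MemHeps (s ε : ℝ) (V : R3 → ℝ) (u : R3 → ℝ) : Prop :=
  MemHs s u ∧ Integrable (fun x : R3 => V (ε • x) * u x ^ 2)

/-- Squared norm `‖u‖_ε² = a[u]_s² + ∫ V(εx)u²`. -/
def normEpsSq (s a ε : ℝ) (V : R3 → ℝ) (u : R3 → ℝ) : ℝ :=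
  a * gagSq s u + ∫ x : R3, V (ε • x) * u x ^ 2

/-- The modified energy functional `J_ε`. -/
def Jeps (s a b ε V₁ K a₀ : ℝ) (f : ℝ → ℝ) (Λ : Set R3) (V : R3 → ℝ) (u : R3 → ℝ) : ℝ :=
  1 / 2 * normEpsSq s a ε V u + b / 4 * gagSq s u ^ 2
    - ∫ x : R3, Gpen s V₁ K a₀ f Λ (ε • x) (u x)

/-- The pairing `⟨J'_ε(u), v⟩`. -/
def JepsD (s a b ε V₁ K a₀ : ℝ) (f : ℝ → ℝ) (Λ : Set R3) (V : R3 → ℝ) (u v : R3 → ℝ) : ℝ :=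
  (a + b * gagSq s u) * gagForm s u v + (∫ x : R3, V (ε • x) * u x * v x)
    - ∫ x : R3, gpen s V₁ K a₀ f Λ (ε • x) (u x) * v x

/-- Admissible mountain-pass paths `Γ_ε` (continuity w.r.t. the `H_ε` norm). -/
def MPpaths (s a b ε V₁ K a₀ : ℝ) (f : ℝ → ℝ) (Λ : Set R3) (V : R3 → ℝ) :
    Set (ℝ → R3 → ℝ) :=
  {γ | (∀ t ∈ Icc (0:ℝ) 1, MemHeps s ε V (γ t)) ∧
    (∀ t ∈ Icc (0:ℝ) 1, ∀ δ > 0, ∃ η > 0, ∀ t' ∈ Icc (0:ℝ) 1,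
      |t' - t| < η → normEpsSq s a ε V (γ t' - γ t) < δ) ∧
    γ 0 = 0 ∧ Jeps s a b ε V₁ K a₀ f Λ V (γ 1) ≤ 0}

/-- The mountain-pass level `c_ε`. -/
def cMP (s a b ε V₁ K a₀ : ℝ) (f : ℝ → ℝ) (Λ : Set R3) (V : R3 → ℝ) : ℝ :=
  sInf ((fun γ => sSup ((fun t => Jeps s a b ε V₁ K a₀ f Λ V (γ t)) '' Icc (0:ℝ) 1)) ''
    MPpaths s a b ε V₁ K a₀ f Λ V)

/-- The limiting (autonomous) functional `I_μ`. -/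
def Ilim (s a b μ : ℝ) (f : ℝ → ℝ) (u : R3 → ℝ) : ℝ :=
  1 / 2 * (a * gagSq s u + μ * ∫ x : R3, u x ^ 2) + b / 4 * gagSq s u ^ 2
    - ∫ x : R3, (prim f (u x) + 1 / pc s * max (u x) 0 ^ pc s)

/-- The pairing `⟨I'_μ(u), v⟩`. -/
def IlimD (s a b μ : ℝ) (f : ℝ → ℝ) (u v : R3 → ℝ) : ℝ :=
  (a + b * gagSq s u) * gagForm s u v + μ * (∫ x : R3, u x * v x)
    - ∫ x : R3, (f (u x) + max (u x) 0 ^ (pc s - 1)) * v x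

/-- Nehari manifold of `I_μ`. -/
def Nehari (s a b μ : ℝ) (f : ℝ → ℝ) : Set (R3 → ℝ) :=
  {u | MemHs s u ∧ u ≠ 0 ∧ IlimD s a b μ f u u = 0}

/-- Ground state level `d_μ`. -/
def dlim (s a b μ : ℝ) (f : ℝ → ℝ) : ℝ :=
  sInf (Ilim s a b μ f '' Nehari s a b μ f)

/-- Palais–Smale sequence for `J_ε` at level `c`. -/
def PSseq (s a b ε V₁ K a₀ : ℝ) (f : ℝ → ℝ) (Λ : Set R3) (V : R3 → ℝ)
    (c : ℝ) (U : ℕ → R3 → ℝ) : Prop :=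
  (∀ n, MemHeps s ε V (U n)) ∧
  Tendsto (fun n => Jeps s a b ε V₁ K a₀ f Λ V (U n)) atTop (𝓝 c) ∧
  ∃ e : ℕ → ℝ, Tendsto e atTop (𝓝 0) ∧ ∀ n, ∀ v : R3 → ℝ, MemHeps s ε V v →
    |JepsD s a b ε V₁ K a₀ f Λ V (U n) v| ≤ e n * Real.sqrt (normEpsSq s a ε V v)

end

/-! Factoring out `t ^ (3 - 2s)`, `K̃(t) = t ^ (3 - 2s) (aS t ^ (2s - 3) + bS² - t ^ (4s - 3))`.
Since `2s - 3 < 0 < 4s - 3`, the bracket is strictly decreasing on `(0, ∞)`, positive near `0`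
and negative for large `t`, so it has exactly one zero `T`, and `K̃` has the same sign pattern.
As `K' = ((3 - 2s)/2) t ^ (2 - 2s) K̃`, the function `K` increases on `(0, T]` and decreases on
`[T, ∞)`. -/

def PosBeforeNegAfter (g : ℝ → ℝ) (T : ℝ) : Prop :=
  g T = 0 ∧ (∀ t ∈ Ioo 0 T, 0 < g t) ∧ ∀ t, T < t → g t < 0

namespace PosBeforeNegAfter

variable {f g : ℝ → ℝ} {T : ℝ}

theorem eq_of_eq_zero (hg : PosBeforeNegAfter g T) {T' : ℝ} (hT' : 0 < T') (h0 : g T' = 0) :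
    T' = T := by
  obtain ⟨-, hpos, hneg⟩ := hg
  rcases lt_trichotomy T' T with h | h | h
  · exact absurd h0 (hpos T' ⟨hT', h⟩).ne'
  · exact h
  · exact absurd h0 (hneg T' h).ne

theorem of_eq_mul (hg : PosBeforeNegAfter g T) (hT : 0 < T) {w : ℝ → ℝ}
    (hw : ∀ t, 0 < t → 0 < w t) (hfg : ∀ t, 0 < t → f t = w t * g t) :
    PosBeforeNegAfter f T := by
  obtain ⟨hzero, hpos, hneg⟩ := hg
  refine ⟨by rw [hfg T hT, hzero, mul_zero], fun t ht => ?_, fun t ht => ?_⟩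
  · rw [hfg t ht.1]
    exact mul_pos (hw t ht.1) (hpos t ht)
  · have ht0 : 0 < t := hT.trans ht
    rw [hfg t ht0]
    exact mul_neg_of_pos_of_neg (hw t ht0) (hneg t ht)

theorem lt_of_hasDerivAt {f' : ℝ → ℝ} (hf' : PosBeforeNegAfter f' T) (hT : 0 < T)
    (hf : ∀ t, 0 < t → HasDerivAt f (f' t) t) {t : ℝ} (ht : 0 < t) (htT : t ≠ T) :
    f t < f T := by
  have hcont : ∀ D ⊆ Ioi 0, ContinuousOn f D := fun D hD x hx =>
    (hf x (hD hx)).continuousAt.continuousWithinAt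
  rcases htT.lt_or_gt with hlt | hgt
  · have hmono : StrictMonoOn f (Icc t T) := by
      refine strictMonoOn_of_hasDerivWithinAt_pos (f' := f') (convex_Icc t T)
        (hcont _ fun x hx => ht.trans_le hx.1) (fun x hx => ?_) fun x hx => ?_ <;>
        rw [interior_Icc] at hx
      · exact (hf x (ht.trans hx.1)).hasDerivWithinAt
      · exact hf'.2.1 x ⟨ht.trans hx.1, hx.2⟩
    exact hmono (left_mem_Icc.2 hlt.le) (right_mem_Icc.2 hlt.le) hlt
  · have hanti : StrictAntiOn f (Icc T t) := by
      refine strictAntiOn_of_hasDerivWithinAt_neg (f' := f') (convex_Icc T t)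
        (hcont _ fun x hx => hT.trans_le hx.1) (fun x hx => ?_) fun x hx => ?_ <;>
        rw [interior_Icc] at hx
      · exact (hf x (hT.trans hx.1)).hasDerivWithinAt
      · exact hf'.2.2 x hx.1
    exact hanti (left_mem_Icc.2 hgt.le) (right_mem_Icc.2 hgt.le) hgt

end PosBeforeNegAfter

theorem StrictAntiOn.exists_posBeforeNegAfter {g : ℝ → ℝ} (hg : StrictAntiOn g (Ioi 0))
    (hc : ContinuousOn g (Ioi 0)) {t₀ t₁ : ℝ} (ht₀ : 0 < t₀) (ht₁ : 0 < t₁) (hpos : 0 < g t₀)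
    (hneg : g t₁ < 0) : ∃ T, 0 < T ∧ PosBeforeNegAfter g T := by
  obtain ⟨T, hT, hzero⟩ :=
    isPreconnected_Ioi.intermediate_value ht₁ ht₀ hc ⟨hneg.le, hpos.le⟩
  refine ⟨T, hT, hzero, fun t ht => ?_, fun t ht => ?_⟩
  · simpa [hzero] using hg ht.1 hT ht.2
  · simpa [hzero] using hg hT (mem_Ioi.2 (lt_trans hT ht)) ht

section RpowProfile

variable {c d p q : ℝ}

theorem strictAntiOn_mul_rpow_add_sub_rpow (hc : 0 ≤ c) (hp : p ≤ 0) (hq : 0 < q) :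
    StrictAntiOn (fun t : ℝ => c * t ^ p + d - t ^ q) (Ioi 0) := by
  intro x hx y _ hxy
  have h₁ : y ^ p ≤ x ^ p := rpow_le_rpow_of_nonpos hx hxy.le hp
  have h₂ : x ^ q < y ^ q := rpow_lt_rpow (le_of_lt hx) hxy hq
  have := mul_le_mul_of_nonneg_left h₁ hc
  dsimp only
  linarith

theorem continuousOn_mul_rpow_add_sub_rpow :
    ContinuousOn (fun t : ℝ => c * t ^ p + d - t ^ q) (Ioi 0) := by
  intro x hx
  have hx0 : x ≠ 0 := ne_of_gt hx
  exact (((continuousAt_const.mul (continuousAt_rpow_const x p (Or.inl hx0))).add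
    continuousAt_const).sub (continuousAt_rpow_const x q (Or.inl hx0))).continuousWithinAt

theorem exists_posBeforeNegAfter_mul_rpow_add_sub_rpow (hc : 0 ≤ c) (hd : 0 < d) (hp : p ≤ 0)
    (hq : 0 < q) : ∃ T, 0 < T ∧ PosBeforeNegAfter (fun t : ℝ => c * t ^ p + d - t ^ q) T := by
  have hsmall : Tendsto (fun t : ℝ => t ^ q) (𝓝[>] 0) (𝓝 0) := by
    have := continuousAt_rpow_const 0 q (Or.inr hq.le)
    rw [ContinuousAt, zero_rpow hq.ne'] at this
    exact this.mono_left nhdsWithin_le_nhds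
  obtain ⟨t₀, ht₀d, ht₀⟩ :=
    ((hsmall.eventually (gt_mem_nhds hd)).and self_mem_nhdsWithin).exists
  obtain ⟨t₁, ht₁cd, ht₁⟩ := (((tendsto_rpow_atTop hq).eventually_gt_atTop (c + d)).and
    (eventually_ge_atTop 1)).exists
  refine (strictAntiOn_mul_rpow_add_sub_rpow hc hp hq).exists_posBeforeNegAfter
    continuousOn_mul_rpow_add_sub_rpow ht₀ (zero_lt_one.trans_le ht₁) ?_ ?_
  · have : 0 ≤ c * t₀ ^ p := mul_nonneg hc (rpow_nonneg (le_of_lt ht₀) p)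
    linarith
  · have : c * t₁ ^ p ≤ c := mul_le_of_le_one_right hc (rpow_le_one_of_one_le_of_nonpos ht₁ hp)
    linarith

end RpowProfile

noncomputable def kTilde (s a b S t : ℝ) : ℝ :=
  a * S + b * S ^ 2 * t ^ (3 - 2 * s) - t ^ (2 * s)

noncomputable def kProfile (s a b S t : ℝ) : ℝ :=
  a * S / 2 * t ^ (3 - 2 * s) + b * S ^ 2 / 4 * t ^ (6 - 4 * s) - (3 - 2 * s) / 6 * t ^ (3:ℕ)

section Kirchhoff

variable {s a b S t : ℝ}

theorem kTilde_eq_rpow_mul (ht : 0 < t) :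
    kTilde s a b S t =
      t ^ (3 - 2 * s) * (a * S * t ^ (2 * s - 3) + b * S ^ 2 - t ^ (4 * s - 3)) := by
  have e₁ : t ^ (3 - 2 * s) * t ^ (2 * s - 3) = 1 := by
    rw [← rpow_add ht]; norm_num
  have e₂ : t ^ (3 - 2 * s) * t ^ (4 * s - 3) = t ^ (2 * s) := by
    rw [← rpow_add ht]; ring_nf
  unfold kTilde
  linear_combination e₂ - a * S * e₁

theorem hasDerivAt_kProfile (ht : 0 < t) :
    HasDerivAt (kProfile s a b S) ((3 - 2 * s) / 2 * t ^ (2 - 2 * s) * kTilde s a b S t) t := by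
  have d₁ := hasDerivAt_rpow_const (p := 3 - 2 * s) (Or.inl ht.ne')
  have d₂ := hasDerivAt_rpow_const (p := 6 - 4 * s) (Or.inl ht.ne')
  refine (((d₁.const_mul (a * S / 2)).add (d₂.const_mul (b * S ^ 2 / 4))).sub
    ((hasDerivAt_pow 3 t).const_mul ((3 - 2 * s) / 6))).congr_deriv ?_
  have e₁ : t ^ (3 - 2 * s - 1) = t ^ (2 - 2 * s) := by ring_nf
  have e₂ : t ^ (6 - 4 * s - 1) = t ^ (2 - 2 * s) * t ^ (3 - 2 * s) := by
    rw [← rpow_add ht]; ring_nf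
  have e₃ : t ^ (2 - 2 * s) * t ^ (2 * s) = t ^ 2 := by
    rw [← rpow_add ht, ← rpow_natCast]; norm_num
  rw [e₁, e₂]
  unfold kTilde
  push_cast
  linear_combination ((3 - 2 * s) / 2) * e₃

end Kirchhoff

/-- properties of `K̃(t) = aS + bS²t^{3-2s} - t^{2s}` and of
`K(t) = (aS/2)t^{3-2s} + (bS²/4)t^{6-4s} - ((3-2s)/6)t³`. -/
theorem statement_3
    (s a b S : ℝ) (hs : s ∈ Ioo (3/4:ℝ) 1) (ha : 0 < a) (hb : 0 < b) (hS : 0 < S) :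
    ∃ T : ℝ, 0 < T ∧
      a * S + b * S ^ 2 * T ^ (3 - 2 * s) - T ^ (2 * s) = 0 ∧
      (∀ t ∈ Ioo (0:ℝ) T, 0 < a * S + b * S ^ 2 * t ^ (3 - 2 * s) - t ^ (2 * s)) ∧
      (∀ t, T < t → a * S + b * S ^ 2 * t ^ (3 - 2 * s) - t ^ (2 * s) < 0) ∧
      (∀ T' : ℝ, 0 < T' → a * S + b * S ^ 2 * T' ^ (3 - 2 * s) - T' ^ (2 * s) = 0 →
        T' = T) ∧
      (∀ t ∈ Ioi (0:ℝ), t ≠ T →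
        a * S / 2 * t ^ (3 - 2 * s) + b * S ^ 2 / 4 * t ^ (6 - 4 * s)
            - (3 - 2 * s) / 6 * t ^ (3:ℕ)
          < a * S / 2 * T ^ (3 - 2 * s) + b * S ^ 2 / 4 * T ^ (6 - 4 * s)
            - (3 - 2 * s) / 6 * T ^ (3:ℕ)) ∧
      (∀ t ∈ Ioi (0:ℝ),
        HasDerivAt (fun t : ℝ =>
            a * S / 2 * t ^ (3 - 2 * s) + b * S ^ 2 / 4 * t ^ (6 - 4 * s)
              - (3 - 2 * s) / 6 * t ^ (3:ℕ))
          ((3 - 2 * s) / 2 * t ^ (2 - 2 * s)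
            * (a * S + b * S ^ 2 * t ^ (3 - 2 * s) - t ^ (2 * s))) t) := by
  obtain ⟨hs₁, hs₂⟩ := hs
  obtain ⟨T, hT, hsign⟩ := exists_posBeforeNegAfter_mul_rpow_add_sub_rpow (c := a * S)
    (d := b * S ^ 2) (p := 2 * s - 3) (q := 4 * s - 3) (by positivity) (by positivity)
    (by linarith) (by linarith)
  have hK : PosBeforeNegAfter (kTilde s a b S) T :=
    hsign.of_eq_mul hT (fun t ht => rpow_pos_of_pos ht _) fun _ ht => kTilde_eq_rpow_mul ht
  have hK' : PosBeforeNegAfter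
      (fun t => (3 - 2 * s) / 2 * t ^ (2 - 2 * s) * kTilde s a b S t) T :=
    hK.of_eq_mul hT (fun t ht => mul_pos (by linarith) (rpow_pos_of_pos ht _))
      fun _ _ => rfl
  refine ⟨T, hT, hK.1, hK.2.1, hK.2.2, fun T' hT' h₀ => hK.eq_of_eq_zero hT' h₀,
    fun t ht htT => hK'.lt_of_hasDerivAt hT (fun _ h => hasDerivAt_kProfile h) ht htT,
    fun t ht => hasDerivAt_kProfile ht⟩
end

section
/- Assume (V1)-(V2) and (f1)-(f4). Then for every ε > 0 and every u ∈ H_ε one has J_ε(u) − (1/ϑ)⟨J′_ε(u), u⟩ ≥ ((ϑ−2)/(2ϑ))(1 − 1/K)‖u‖_ε². Consequently, every Palais–Smale sequence {u_n} ⊂ H_ε at the mountain-pass level (i.e. J_ε(u_n) → c_ε and J′_ε(u_n) → 0 in the dual of H_ε) is bounded in H_ε. -/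
open MeasureTheory Real Set Filter Topology

/-!
For `t > 0` the penalized nonlinearity satisfies `ϑ G(x,t) ≤ g(x,t) t + ((ϑ-2)/2)(V₁/K) t²`: on `Λ`,
and off `Λ` below `a₀`, this is the Ambrosetti–Rabinowitz condition (f3) together with `ϑ < 2*_s`
for the critical power; off `Λ` beyond `a₀`, `g` is the linear function `V₁ t / K`. Integrating and
using `V ≥ V₁` gives
`J_ε(u) - ϑ⁻¹⟨J'_ε(u), u⟩ ≥ (1/2 - 1/ϑ)(‖u‖²_ε - K⁻¹ ∫ V(εx) u²) + (1/4 - 1/ϑ) b [u]⁴`,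
which dominates `((ϑ-2)/(2ϑ))(1 - 1/K)‖u‖²_ε`. Along a Palais–Smale sequence the left side is at most
`C + o(1)‖u_n‖_ε`, and `K > 1` makes the coefficient positive, so `‖u_n‖_ε` stays bounded.
-/

lemma continuous_posPart_rpow {p : ℝ} (hp : 0 ≤ p) : Continuous fun t : ℝ => max t 0 ^ p :=
  (continuous_id.max continuous_const).rpow_const fun _ => Or.inr hp

lemma integral_posPart_rpow {p : ℝ} (hp : 1 < p) (t : ℝ) :
    ∫ τ in (0:ℝ)..t, max τ 0 ^ (p - 1) = max t 0 ^ p / p := by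
  rcases le_or_gt t 0 with ht | ht
  · rw [intervalIntegral.integral_congr (g := fun _ => (0:ℝ)) fun τ hτ => by
      simp only [max_eq_right (hτ.2.trans (max_le le_rfl ht)), zero_rpow (by linarith : p - 1 ≠ 0)]]
    simp [max_eq_right ht, zero_rpow (by linarith : p ≠ 0)]
  · rw [intervalIntegral.integral_congr (g := fun τ => τ ^ (p - 1)) fun τ hτ => by
      simp only [max_eq_left ((min_eq_left ht.le).symm.le.trans hτ.1)],
      integral_rpow (Or.inl (by linarith)), sub_add_cancel, zero_rpow (by linarith), sub_zero,
      max_eq_left ht.le]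

lemma le_max_one_of_mul_sq_le {δ A B x : ℝ} (hδ : 0 < δ) (hx : 0 ≤ x)
    (h : δ * x ^ 2 ≤ A + B * x) : x ≤ max 1 ((|A| + |B|) / δ) := by
  rcases le_or_gt x 1 with hx1 | hx1
  · exact hx1.trans (le_max_left _ _)
  · have hA : A ≤ |A| * x := (le_abs_self A).trans (le_mul_of_one_le_right (abs_nonneg A) hx1.le)
    have hB : B * x ≤ |B| * x := mul_le_mul_of_nonneg_right (le_abs_self B) hx
    refine le_max_of_le_right ((le_div_iff₀ hδ).2 (le_of_mul_le_mul_right ?_ (one_pos.trans hx1)))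
    nlinarith

open scoped Classical in
lemma aestronglyMeasurable_ite_comp {α : Type*} [MeasurableSpace α] {μ : Measure α} {S : Set α}
    (hS : MeasurableSet S) {φ ψ : ℝ → ℝ} (hφ : Continuous φ) (hψ : Continuous ψ) {u : α → ℝ}
    (hu : AEStronglyMeasurable u μ) :
    AEStronglyMeasurable (fun x => if x ∈ S then φ (u x) else ψ (u x)) μ :=
  AEStronglyMeasurable.piecewise hS (hφ.comp_aestronglyMeasurable hu).restrict
    (hψ.comp_aestronglyMeasurable hu).restrict

/-- The reverse bound makes `ψ` and `φ` integrable together, so the junk value `0` of a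
non-integrable integral cannot break the inequality. -/
lemma integral_le_mul_integral_add {α : Type*} [MeasurableSpace α] {μ : Measure α}
    {φ ψ w h : α → ℝ} {c C : ℝ} (hψ0 : ∀ x, 0 ≤ ψ x) (hφ0 : ∀ x, 0 ≤ φ x) (hw0 : ∀ x, 0 ≤ w x)
    (hψm : AEStronglyMeasurable ψ μ) (hφm : AEStronglyMeasurable φ μ) (hw : Integrable w μ)
    (hh : Integrable h μ) (hle : ∀ x, ψ x ≤ c * φ x + w x) (hrev : ∀ x, φ x ≤ C * ψ x + h x) :
    ∫ x, ψ x ∂μ ≤ c * ∫ x, φ x ∂μ + ∫ x, w x ∂μ := by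
  by_cases hφ : Integrable φ μ
  · have hdom : Integrable (fun x => c * φ x + w x) μ := (hφ.const_mul c).add hw
    have hψ : Integrable ψ μ := hdom.mono' hψm (ae_of_all _ fun x => by
      rw [Real.norm_eq_abs, abs_of_nonneg (hψ0 x)]
      exact hle x)
    calc ∫ x, ψ x ∂μ ≤ ∫ x, (c * φ x + w x) ∂μ := integral_mono hψ hdom hle
      _ = c * ∫ x, φ x ∂μ + ∫ x, w x ∂μ := by
        rw [integral_add (hφ.const_mul c) hw, integral_const_mul]
  · have hψ : ¬ Integrable ψ μ := fun hψ => hφ <|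
      ((hψ.const_mul C).add hh).mono' hφm (ae_of_all _ fun x => by
        rw [Real.norm_eq_abs, abs_of_nonneg (hφ0 x)]
        exact hrev x)
    rw [integral_undef hφ, integral_undef hψ, mul_zero, zero_add]
    exact integral_nonneg hw0

lemma prim_of_nonpos {h : ℝ → ℝ} (h0 : ∀ t ≤ 0, h t = 0) {t : ℝ} (ht : t ≤ 0) : prim h t = 0 := by
  rw [prim, intervalIntegral.integral_congr (g := fun _ => (0:ℝ))
    fun τ hτ => h0 τ (hτ.2.trans (max_le le_rfl ht)), intervalIntegral.integral_zero]

lemma prim_nonneg {h : ℝ → ℝ} (hnn : ∀ t, 0 ≤ h t) (h0 : ∀ t ≤ 0, h t = 0) (t : ℝ) :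
    0 ≤ prim h t := by
  rcases le_or_gt t 0 with ht | ht
  · rw [prim_of_nonpos h0 ht]
  · exact intervalIntegral.integral_nonneg ht.le fun τ _ => hnn τ

lemma continuous_prim {h : ℝ → ℝ} (hc : Continuous h) : Continuous (prim h) :=
  intervalIntegral.continuous_primitive (fun _ _ => hc.intervalIntegrable _ _) 0

lemma prim_add_posPart_rpow {f : ℝ → ℝ} (hfc : Continuous f) {p : ℝ} (hp : 1 < p) (t : ℝ) :
    prim (fun τ => f τ + max τ 0 ^ (p - 1)) t = prim f t + max t 0 ^ p / p := by
  rw [prim, intervalIntegral.integral_add (hfc.intervalIntegrable _ _)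
    ((continuous_posPart_rpow (by linarith)).intervalIntegrable _ _), integral_posPart_rpow hp,
    prim]

namespace Hf

variable {s q σ C₀ ϑ : ℝ} {f : ℝ → ℝ}

lemma continuous (hf : Hf s f q σ C₀ ϑ) : Continuous f := hf.1

lemma eq_zero_of_nonpos (hf : Hf s f q σ C₀ ϑ) : ∀ t ≤ 0, f t = 0 := hf.2.1

lemma theta_mul_prim_le (hf : Hf s f q σ C₀ ϑ) {t : ℝ} (ht : 0 < t) : ϑ * prim f t ≤ t * f t :=
  (hf.2.2.2.2.1.2 t ht).2

lemma monotoneOn_div_pow (hf : Hf s f q σ C₀ ϑ) : MonotoneOn (fun t => f t / t ^ 3) (Ioi 0) :=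
  hf.2.2.2.2.2.monotoneOn

lemma nonneg (hf : Hf s f q σ C₀ ϑ) (t : ℝ) : 0 ≤ f t := by
  obtain ⟨-, hf0, -, ⟨-, -, hC₀, hflb, -⟩, -⟩ := hf
  rcases le_or_gt t 0 with ht | ht
  · rw [hf0 t ht]
  · exact (mul_pos hC₀ (rpow_pos_of_pos ht _)).le.trans (hflb t ht)

lemma four_lt_theta (hf : Hf s f q σ C₀ ϑ) : 4 < ϑ := hf.2.2.2.2.1.1.1

lemma theta_lt_pc (hf : Hf s f q σ C₀ ϑ) : ϑ < pc s := hf.2.2.2.2.1.1.2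

lemma four_lt_pc (hf : Hf s f q σ C₀ ϑ) : 4 < pc s := hf.four_lt_theta.trans hf.theta_lt_pc

lemma theta_mul_prim_add_le (hf : Hf s f q σ C₀ ϑ) {t : ℝ} (ht : 0 < t) :
    ϑ * (prim f t + t ^ pc s / pc s) ≤ (f t + t ^ (pc s - 1)) * t := by
  have hp : 0 < pc s := by linarith [hf.four_lt_pc]
  have hpow : t ^ (pc s - 1) * t = t ^ pc s := by rw [← rpow_add_one ht.ne', sub_add_cancel]
  have hcrit : ϑ * (t ^ pc s / pc s) ≤ t ^ pc s := by
    rw [← mul_div_assoc, div_le_iff₀ hp]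
    nlinarith [rpow_nonneg ht.le (pc s), hf.theta_lt_pc]
  rw [add_mul, hpow, mul_add]
  linarith [hf.theta_mul_prim_le ht]

/-- On `[0, T]` both sides are bounded, and beyond `T` the growth bound `f(t) ≤ t^(σ-1)` with
`σ < 2*_s` lets the critical power dominate. -/
lemma exists_mul_le_mul_prim_add (hf : Hf s f q σ C₀ ϑ) :
    ∃ C, 0 ≤ C ∧ ∀ t > 0,
      (f t + t ^ (pc s - 1)) * t ≤ 2 * pc s * (prim f t + t ^ pc s / pc s) + C := by
  have hfnn := hf.nonneg
  have hp : 1 < pc s := by linarith [hf.four_lt_pc]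
  obtain ⟨hfc, hf0, -, ⟨-, hσ, -, -, hfσ⟩, -⟩ := hf
  obtain ⟨T₀, hT₀⟩ := eventually_atTop.1 (hfσ.eventually (gt_mem_nhds one_pos))
  set T := max T₀ 1
  obtain ⟨C, hC⟩ := isCompact_Icc.exists_bound_of_continuousOn (hfc.continuousOn (s := Icc 0 T))
  have hT : 1 ≤ T := le_max_right _ _
  have hC₂ : 0 ≤ (C + T ^ (pc s - 1)) * T :=
    mul_nonneg (add_nonneg ((norm_nonneg _).trans (hC 0 ⟨le_rfl, by linarith⟩)) (by positivity))
      (by linarith)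
  refine ⟨(C + T ^ (pc s - 1)) * T, hC₂, fun t ht => ?_⟩
  have hG : 0 ≤ 2 * pc s * (prim f t + t ^ pc s / pc s) :=
    mul_nonneg (by linarith) (add_nonneg (prim_nonneg hfnn hf0 t) (by positivity))
  rcases le_or_gt t T with htT | htT
  · have hft : f t ≤ C := (le_abs_self _).trans (hC t ⟨ht.le, htT⟩)
    have hpow : t ^ (pc s - 1) ≤ T ^ (pc s - 1) := rpow_le_rpow ht.le htT (by linarith)
    have := mul_le_mul (add_le_add hft hpow) htT ht.le
      ((hfnn t).trans (hft.trans (le_add_of_nonneg_right (by positivity))))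
    linarith
  · have ht1 : 1 ≤ t := (le_max_right _ _).trans htT.le
    have hfσt : f t ≤ t ^ (σ - 1) :=
      ((div_lt_one (rpow_pos_of_pos ht _)).1 (hT₀ t ((le_max_left _ _).trans htT.le))).le
    have hσp : t ^ σ ≤ t ^ pc s := rpow_le_rpow_of_exponent_le ht1 hσ.2.le
    have hfσt' : f t * t ≤ t ^ σ :=
      calc f t * t ≤ t ^ (σ - 1) * t := mul_le_mul_of_nonneg_right hfσt ht.le
        _ = t ^ σ := by rw [← rpow_add_one ht.ne', sub_add_cancel]
    have hppow : t ^ (pc s - 1) * t = t ^ pc s := by rw [← rpow_add_one ht.ne', sub_add_cancel]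
    have hdiv : 2 * pc s * (t ^ pc s / pc s) = 2 * t ^ pc s := by field_simp
    rw [add_mul, hppow, mul_add, hdiv]
    linarith [mul_nonneg (by linarith : (0:ℝ) ≤ 2 * pc s) (prim_nonneg hfnn hf0 t)]

end Hf

section Truncation

variable {s V₁ K a₀ : ℝ} {f : ℝ → ℝ}

lemma ftil_of_le {t : ℝ} (ht : t ≤ a₀) : ftil s V₁ K a₀ f t = f t + max t 0 ^ (pc s - 1) :=
  if_pos ht

lemma ftil_of_lt {t : ℝ} (ht : a₀ < t) : ftil s V₁ K a₀ f t = V₁ / K * t :=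
  if_neg (not_le.2 ht)

lemma ftil_of_nonpos (hf0 : ∀ t ≤ 0, f t = 0) (hp : 1 < pc s) (ha₀ : 0 ≤ a₀) {t : ℝ}
    (ht : t ≤ 0) : ftil s V₁ K a₀ f t = 0 := by
  rw [ftil_of_le (ht.trans ha₀), hf0 t ht, max_eq_right ht, zero_rpow (by linarith), add_zero]

lemma ftil_nonneg (hfnn : ∀ t, 0 ≤ f t) (hV₁ : 0 ≤ V₁) (hK : 0 ≤ K) (ha₀ : 0 ≤ a₀) (t : ℝ) :
    0 ≤ ftil s V₁ K a₀ f t := by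
  rcases le_or_gt t a₀ with ht | ht
  · rw [ftil_of_le ht]
    exact add_nonneg (hfnn t) (rpow_nonneg (le_max_right _ _) _)
  · rw [ftil_of_lt ht]
    exact mul_nonneg (div_nonneg hV₁ hK) (ha₀.trans ht.le)

lemma continuous_ftil (hfc : Continuous f) (hp : 1 ≤ pc s) (ha₀ : 0 ≤ a₀)
    (ha₀eq : f a₀ + a₀ ^ (pc s - 1) = V₁ / K * a₀) : Continuous (ftil s V₁ K a₀ f) :=
  Continuous.if_le (hfc.add (continuous_posPart_rpow (by linarith)))
    (continuous_const.mul continuous_id) continuous_id continuous_const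
    fun t ht => by rw [ht, max_eq_left ha₀, ha₀eq]

/-- Below `a₀` the truncation lies under the line `V₁ t / K` because `f(t)/t³` increases and
`a₀` is where `f(t) + t^(2*_s - 1)` meets that line. -/
lemma ftil_le (hfnn : ∀ t, 0 ≤ f t) (hf4 : MonotoneOn (fun t => f t / t ^ 3) (Ioi 0))
    (hp : 2 ≤ pc s) (ha₀ : 0 < a₀) (ha₀eq : f a₀ + a₀ ^ (pc s - 1) = V₁ / K * a₀) {t : ℝ}
    (ht : 0 < t) : ftil s V₁ K a₀ f t ≤ V₁ / K * t := by
  rcases le_or_gt t a₀ with hta | hta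
  · set r := t / a₀ with hr
    have hr0 : 0 < r := div_pos ht ha₀
    have hr1 : r ≤ 1 := (div_le_one ha₀).2 hta
    have hf_le : f t ≤ f a₀ * r := by
      have hmono : f t / t ^ 3 ≤ f a₀ / a₀ ^ 3 := hf4 ht ha₀ hta
      have ht3 : t ^ 3 = r ^ 3 * a₀ ^ 3 := by rw [hr]; field_simp
      rw [ht3, div_le_div_iff₀ (by positivity) (by positivity)] at hmono
      have hr3 : r ^ 3 ≤ r := by nlinarith [mul_pos hr0 hr0]
      nlinarith [hfnn a₀, mul_le_mul_of_nonneg_left hr3 (hfnn a₀), pow_pos ha₀ 3]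
    have hpow_le : t ^ (pc s - 1) ≤ a₀ ^ (pc s - 1) * r := by
      have hrpow : r ^ (pc s - 1) ≤ r := by
        simpa using rpow_le_rpow_of_exponent_ge hr0 hr1 (by linarith : (1:ℝ) ≤ pc s - 1)
      calc t ^ (pc s - 1) = a₀ ^ (pc s - 1) * r ^ (pc s - 1) := by
            rw [← mul_rpow ha₀.le hr0.le, hr, mul_div_cancel₀ _ ha₀.ne']
        _ ≤ a₀ ^ (pc s - 1) * r := mul_le_mul_of_nonneg_left hrpow (rpow_nonneg ha₀.le _)
    calc ftil s V₁ K a₀ f t = f t + t ^ (pc s - 1) := by rw [ftil_of_le hta, max_eq_left ht.le]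
      _ ≤ (f a₀ + a₀ ^ (pc s - 1)) * r := by linarith
      _ = V₁ / K * t := by rw [ha₀eq, hr]; field_simp
  · exact (ftil_of_lt hta).le

lemma prim_ftil_of_le (hfc : Continuous f) (hp : 1 < pc s) (ha₀ : 0 ≤ a₀) {t : ℝ}
    (ht : t ≤ a₀) : prim (ftil s V₁ K a₀ f) t = prim f t + max t 0 ^ pc s / pc s := by
  rw [← prim_add_posPart_rpow hfc hp, prim, prim]
  exact intervalIntegral.integral_congr fun τ hτ => ftil_of_le (hτ.2.trans (max_le ha₀ ht))

lemma prim_ftil_of_lt (hfc : Continuous f) (hp : 1 < pc s) (ha₀ : 0 ≤ a₀)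
    (ha₀eq : f a₀ + a₀ ^ (pc s - 1) = V₁ / K * a₀) {t : ℝ} (ht : a₀ < t) :
    prim (ftil s V₁ K a₀ f) t = prim (ftil s V₁ K a₀ f) a₀ + V₁ / (2 * K) * (t ^ 2 - a₀ ^ 2) := by
  have hint := (continuous_ftil hfc hp.le ha₀ ha₀eq).intervalIntegrable (μ := volume)
  have hlinear : ∫ τ in a₀..t, ftil s V₁ K a₀ f τ = V₁ / (2 * K) * (t ^ 2 - a₀ ^ 2) := by
    rw [intervalIntegral.integral_congr (g := fun τ => V₁ / K * τ) fun τ hτ => ?_,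
      intervalIntegral.integral_const_mul, integral_id]
    · ring
    rcases ((min_eq_left ht.le).symm.le.trans hτ.1).eq_or_lt with rfl | hlt
    · rw [ftil_of_le le_rfl, max_eq_left ha₀, ha₀eq]
    · exact ftil_of_lt hlt
  rw [prim, prim, ← intervalIntegral.integral_add_adjacent_intervals (hint 0 a₀) (hint a₀ t),
    hlinear]

end Truncation

section Penalization

open scoped Classical

variable {s V₁ K a₀ : ℝ} {f : ℝ → ℝ} {Λ : Set R3} {x : R3} {t : ℝ}

lemma gpen_of_nonpos (ht : t ≤ 0) : gpen s V₁ K a₀ f Λ x t = 0 := if_pos ht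

lemma gpen_of_pos (ht : 0 < t) :
    gpen s V₁ K a₀ f Λ x t = if x ∈ Λ then f t + max t 0 ^ (pc s - 1) else ftil s V₁ K a₀ f t := by
  rw [gpen, if_neg (not_le.2 ht)]
  split_ifs with hx <;> simp [hx]

lemma gpen_eq_ite (hf0 : ∀ t ≤ 0, f t = 0) (hp : 1 < pc s) (ha₀ : 0 ≤ a₀) (x : R3) (t : ℝ) :
    gpen s V₁ K a₀ f Λ x t = if x ∈ Λ then f t + max t 0 ^ (pc s - 1) else ftil s V₁ K a₀ f t := by
  rcases le_or_gt t 0 with ht | ht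
  · rw [gpen_of_nonpos ht, ftil_of_nonpos hf0 hp ha₀ ht, hf0 t ht, max_eq_right ht,
      zero_rpow (by linarith), add_zero, ite_self]
  · exact gpen_of_pos ht

lemma Gpen_eq_ite (hfc : Continuous f) (hf0 : ∀ t ≤ 0, f t = 0) (hp : 1 < pc s) (ha₀ : 0 ≤ a₀)
    (x : R3) (t : ℝ) :
    Gpen s V₁ K a₀ f Λ x t =
      if x ∈ Λ then prim f t + max t 0 ^ pc s / pc s else prim (ftil s V₁ K a₀ f) t := by
  simp only [Gpen, gpen_eq_ite hf0 hp ha₀]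
  split_ifs
  · exact prim_add_posPart_rpow hfc hp t
  · rfl

lemma gpen_nonneg (hfnn : ∀ t, 0 ≤ f t) (hV₁ : 0 ≤ V₁) (hK : 0 ≤ K) (ha₀ : 0 ≤ a₀) (x : R3)
    (t : ℝ) : 0 ≤ gpen s V₁ K a₀ f Λ x t := by
  rcases le_or_gt t 0 with ht | ht
  · rw [gpen_of_nonpos ht]
  · rw [gpen_of_pos ht]
    split_ifs
    · exact add_nonneg (hfnn t) (rpow_nonneg (le_max_right _ _) _)
    · exact ftil_nonneg hfnn hV₁ hK ha₀ t

lemma Gpen_nonneg (hfnn : ∀ t, 0 ≤ f t) (hV₁ : 0 ≤ V₁) (hK : 0 ≤ K) (ha₀ : 0 ≤ a₀) (x : R3)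
    (t : ℝ) : 0 ≤ Gpen s V₁ K a₀ f Λ x t :=
  prim_nonneg (gpen_nonneg hfnn hV₁ hK ha₀ x) (fun _ => gpen_of_nonpos) t

lemma gpen_mul_self_nonneg (hfnn : ∀ t, 0 ≤ f t) (hV₁ : 0 ≤ V₁) (hK : 0 ≤ K) (ha₀ : 0 ≤ a₀)
    (x : R3) (t : ℝ) : 0 ≤ gpen s V₁ K a₀ f Λ x t * t := by
  rcases le_or_gt t 0 with ht | ht
  · rw [gpen_of_nonpos ht, zero_mul]
  · exact mul_nonneg (gpen_nonneg hfnn hV₁ hK ha₀ x t) ht.le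

variable {q σ C₀ ϑ : ℝ}

/-- Outside `Λ` and beyond `a₀` the nonlinearity is linear, which is where the quadratic error
term comes from. -/
lemma theta_mul_Gpen_le (hf : Hf s f q σ C₀ ϑ) (ha₀ : 0 < a₀)
    (ha₀eq : f a₀ + a₀ ^ (pc s - 1) = V₁ / K * a₀) (hVK : 0 ≤ V₁ / K) (x : R3) (t : ℝ) :
    ϑ * Gpen s V₁ K a₀ f Λ x t ≤
      gpen s V₁ K a₀ f Λ x t * t + (ϑ - 2) / 2 * (V₁ / K) * t ^ 2 := by
  have hϑ : 2 ≤ ϑ := by linarith [hf.four_lt_theta]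
  have hp : 1 < pc s := by linarith [hf.four_lt_pc]
  have hfc := hf.continuous
  have hf0 := hf.eq_zero_of_nonpos
  have herr : 0 ≤ (ϑ - 2) / 2 * (V₁ / K) * t ^ 2 := by
    have := sub_nonneg.2 hϑ
    positivity
  rcases le_or_gt t 0 with ht | ht
  · rw [Gpen, ← prim, prim_of_nonpos (fun _ => gpen_of_nonpos) ht, gpen_of_nonpos ht]
    linarith
  rw [gpen_of_pos ht, Gpen_eq_ite hfc hf0 hp ha₀.le]
  split_ifs with hx
  · rw [max_eq_left ht.le]
    linarith [hf.theta_mul_prim_add_le ht]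
  rcases le_or_gt t a₀ with hta | hta
  · rw [ftil_of_le hta, prim_ftil_of_le hfc hp ha₀.le hta, max_eq_left ht.le]
    linarith [hf.theta_mul_prim_add_le ht]
  · have hAR := hf.theta_mul_prim_add_le ha₀
    rw [ha₀eq] at hAR
    rw [ftil_of_lt hta, prim_ftil_of_lt hfc hp ha₀.le ha₀eq hta,
      prim_ftil_of_le hfc hp ha₀.le le_rfl,
      max_eq_left ha₀.le, show V₁ / (2 * K) = V₁ / K / 2 by ring]
    nlinarith [mul_nonneg (mul_nonneg (sub_nonneg.2 hϑ) hVK) (sq_nonneg a₀)]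

lemma exists_gpen_mul_le (hf : Hf s f q σ C₀ ϑ) (ha₀ : 0 < a₀)
    (ha₀eq : f a₀ + a₀ ^ (pc s - 1) = V₁ / K * a₀) (hV₁ : 0 ≤ V₁) (hK : 0 < K) :
    ∃ C, ∀ x t, gpen s V₁ K a₀ f Λ x t * t ≤
      2 * pc s * Gpen s V₁ K a₀ f Λ x t + Λ.indicator (fun _ => C) x + V₁ / K * t ^ 2 := by
  obtain ⟨C, hC0, hC⟩ := hf.exists_mul_le_mul_prim_add
  refine ⟨C, fun x t => ?_⟩
  have hp : 1 < pc s := by linarith [hf.four_lt_pc]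
  have hG : 0 ≤ 2 * pc s * Gpen s V₁ K a₀ f Λ x t :=
    mul_nonneg (by linarith) (Gpen_nonneg hf.nonneg hV₁ hK.le ha₀.le x t)
  have hind : 0 ≤ Λ.indicator (fun _ => C) x := indicator_nonneg (fun _ _ => hC0) x
  have hVK : 0 ≤ V₁ / K * t ^ 2 := by positivity
  rcases le_or_gt t 0 with ht | ht
  · rw [gpen_of_nonpos ht, zero_mul]
    linarith
  rw [gpen_of_pos ht]
  rw [Gpen_eq_ite hf.continuous hf.eq_zero_of_nonpos hp ha₀.le] at hG ⊢
  split_ifs at hG ⊢ with hx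
  · rw [indicator_of_mem hx, max_eq_left ht.le]
    linarith [hC t ht]
  · have := mul_le_mul_of_nonneg_right
      (ftil_le hf.nonneg hf.monotoneOn_div_pow (by linarith [hf.four_lt_pc]) ha₀ ha₀eq ht) ht.le
    nlinarith

end Penalization

lemma gagSq_nonneg (s : ℝ) (u : R3 → ℝ) : 0 ≤ gagSq s u :=
  integral_nonneg fun _ => div_nonneg (sq_nonneg _) (rpow_nonneg (norm_nonneg _) _)

lemma gagForm_self (s : ℝ) (u : R3 → ℝ) : gagForm s u u = gagSq s u := by
  simp only [gagForm, gagSq, sq]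

lemma normEpsSq_nonneg {s a ε : ℝ} {V : R3 → ℝ} (ha : 0 ≤ a) (hV : ∀ y, 0 ≤ V y)
    (u : R3 → ℝ) : 0 ≤ normEpsSq s a ε V u :=
  add_nonneg (mul_nonneg ha (gagSq_nonneg s u))
    (integral_nonneg fun _ => mul_nonneg (hV _) (sq_nonneg _))

lemma HV.le_apply {V : R3 → ℝ} {V₁ V₀ : ℝ} {Λ : Set R3} (hV : HV V V₁ Λ V₀) (y : R3) : V₁ ≤ V y :=
  hV.2.1.1 ⟨y, rfl⟩

lemma HV.nonneg_apply {V : R3 → ℝ} {V₁ V₀ : ℝ} {Λ : Set R3} (hV : HV V V₁ Λ V₀) (y : R3) :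
    0 ≤ V y :=
  hV.2.2.1.le.trans (hV.le_apply y)

open scoped Pointwise in
lemma integrable_indicator_comp_smul {Λ : Set R3} (hΛ : MeasurableSet Λ)
    (hΛb : Bornology.IsBounded Λ) {ε : ℝ} (hε : ε ≠ 0) (C : ℝ) :
    Integrable fun x : R3 => Λ.indicator (fun _ => C) (ε • x) := by
  have hS : (fun x : R3 => ε • x) ⁻¹' Λ = ε⁻¹ • Λ := preimage_smul₀ hε Λ
  have hSm : MeasurableSet ((fun x : R3 => ε • x) ⁻¹' Λ) := measurable_const_smul ε hΛ
  simp_rw [← indicator_comp_right (fun x : R3 => ε • x) (g := fun _ => C)]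
  exact (integrable_indicator_iff hSm).2 (integrableOn_const (hS ▸ (hΛb.smul₀ _).measure_lt_top).ne)

section Energy

variable {s a b ε V₁ K a₀ V₀ q σ C₀ ϑ : ℝ} {f : ℝ → ℝ} {Λ : Set R3} {V : R3 → ℝ}

lemma Jeps_sub_mul_JepsD_self (θ : ℝ) (u : R3 → ℝ) :
    Jeps s a b ε V₁ K a₀ f Λ V u - θ * JepsD s a b ε V₁ K a₀ f Λ V u u =
      (1 / 2 - θ) * normEpsSq s a ε V u + (1 / 4 - θ) * b * gagSq s u ^ 2 +
        (θ * (∫ x, gpen s V₁ K a₀ f Λ (ε • x) (u x) * u x) -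
          ∫ x, Gpen s V₁ K a₀ f Λ (ε • x) (u x)) := by
  have hV : ∫ x, V (ε • x) * u x * u x = ∫ x, V (ε • x) * u x ^ 2 := by simp only [mul_assoc, sq]
  rw [Jeps, JepsD, gagForm_self, hV, normEpsSq]
  ring

lemma aestronglyMeasurable_gpen_comp (hf : Hf s f q σ C₀ ϑ) (ha₀ : 0 ≤ a₀)
    (ha₀eq : f a₀ + a₀ ^ (pc s - 1) = V₁ / K * a₀) (hΛ : MeasurableSet Λ) {u : R3 → ℝ}
    (hu : AEStronglyMeasurable u volume) :
    AEStronglyMeasurable (fun x => gpen s V₁ K a₀ f Λ (ε • x) (u x)) volume := by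
  have hp : 1 < pc s := by linarith [hf.four_lt_pc]
  simp only [gpen_eq_ite hf.eq_zero_of_nonpos hp ha₀]
  exact aestronglyMeasurable_ite_comp (measurable_const_smul ε hΛ)
    (hf.continuous.add (continuous_posPart_rpow (by linarith)))
    (continuous_ftil hf.continuous hp.le ha₀ ha₀eq) hu

lemma aestronglyMeasurable_Gpen_comp (hf : Hf s f q σ C₀ ϑ) (ha₀ : 0 ≤ a₀)
    (ha₀eq : f a₀ + a₀ ^ (pc s - 1) = V₁ / K * a₀) (hΛ : MeasurableSet Λ) {u : R3 → ℝ}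
    (hu : AEStronglyMeasurable u volume) :
    AEStronglyMeasurable (fun x => Gpen s V₁ K a₀ f Λ (ε • x) (u x)) volume := by
  have hp : 1 < pc s := by linarith [hf.four_lt_pc]
  simp only [Gpen_eq_ite hf.continuous hf.eq_zero_of_nonpos hp ha₀]
  exact aestronglyMeasurable_ite_comp (measurable_const_smul ε hΛ)
    ((continuous_prim hf.continuous).add ((continuous_posPart_rpow (by linarith)).div_const _))
    (continuous_prim (continuous_ftil hf.continuous hp.le ha₀ ha₀eq)) hu

lemma integral_Gpen_le (hV : HV V V₁ Λ V₀) (hf : Hf s f q σ C₀ ϑ) (hK : 0 < K) (ha₀ : 0 < a₀)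
    (ha₀eq : f a₀ + a₀ ^ (pc s - 1) = V₁ / K * a₀) (hε : ε ≠ 0) {u : R3 → ℝ}
    (hu : MemHeps s ε V u) :
    ∫ x, Gpen s V₁ K a₀ f Λ (ε • x) (u x) ≤
      1 / ϑ * (∫ x, gpen s V₁ K a₀ f Λ (ε • x) (u x) * u x) +
        ∫ x, (ϑ - 2) / (2 * ϑ) * (1 / K) * (V (ε • x) * u x ^ 2) := by
  have hVle := hV.le_apply
  have hV0 := hV.nonneg_apply
  obtain ⟨-, -, hV₁, hΛo, hΛb, -⟩ := hV
  have hϑ : 4 < ϑ := hf.four_lt_theta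
  have hcoef : 0 ≤ (ϑ - 2) / 2 * (1 / K) := by
    have : 0 ≤ ϑ - 2 := by linarith
    positivity
  have hΛ := hΛo.measurableSet
  have hum := hu.1.1.aestronglyMeasurable
  obtain ⟨C, hrev⟩ := exists_gpen_mul_le (Λ := Λ) hf ha₀ ha₀eq hV₁.le hK
  refine integral_le_mul_integral_add (C := 2 * pc s)
    (h := fun x => Λ.indicator (fun _ => C) (ε • x) + V₁ / K * u x ^ 2)
    (fun x => Gpen_nonneg hf.nonneg hV₁.le hK.le ha₀.le _ _)
    (fun x => gpen_mul_self_nonneg hf.nonneg hV₁.le hK.le ha₀.le _ _)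
    (fun x => mul_nonneg (mul_nonneg (div_nonneg (by linarith) (by linarith)) (by positivity))
      (mul_nonneg (hV0 _) (sq_nonneg _)))
    (aestronglyMeasurable_Gpen_comp hf ha₀.le ha₀eq hΛ hum)
    ((aestronglyMeasurable_gpen_comp hf ha₀.le ha₀eq hΛ hum).mul hum)
    (hu.2.const_mul _)
    ((integrable_indicator_comp_smul hΛ hΛb hε C).add (hu.1.1.integrable_sq.const_mul _))
    (fun x => ?_) (fun x => by simpa only [add_assoc] using hrev (ε • x) (u x))
  have hAR := theta_mul_Gpen_le (Λ := Λ) hf ha₀ ha₀eq (by positivity) (ε • x) (u x)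
  have hVx := mul_le_mul_of_nonneg_right (hVle (ε • x)) (sq_nonneg (u x))
  rw [show (ϑ - 2) / 2 * (V₁ / K) * u x ^ 2 = (ϑ - 2) / 2 * (1 / K) * (V₁ * u x ^ 2) by ring] at hAR
  calc Gpen s V₁ K a₀ f Λ (ε • x) (u x) = 1 / ϑ * (ϑ * Gpen s V₁ K a₀ f Λ (ε • x) (u x)) := by
        field_simp
    _ ≤ 1 / ϑ * (gpen s V₁ K a₀ f Λ (ε • x) (u x) * u x +
          (ϑ - 2) / 2 * (1 / K) * (V (ε • x) * u x ^ 2)) := by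
        gcongr
        linarith [mul_le_mul_of_nonneg_left hVx hcoef]
    _ = _ := by field_simp

theorem mul_normEpsSq_le_Jeps_sub_JepsD (ha : 0 ≤ a) (hb : 0 ≤ b) (hV : HV V V₁ Λ V₀)
    (hf : Hf s f q σ C₀ ϑ) (hK : 0 < K) (ha₀ : 0 < a₀)
    (ha₀eq : f a₀ + a₀ ^ (pc s - 1) = V₁ / K * a₀) (hε : ε ≠ 0) {u : R3 → ℝ}
    (hu : MemHeps s ε V u) :
    (ϑ - 2) / (2 * ϑ) * (1 - 1 / K) * normEpsSq s a ε V u ≤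
      Jeps s a b ε V₁ K a₀ f Λ V u - 1 / ϑ * JepsD s a b ε V₁ K a₀ f Λ V u u := by
  have hϑ : 4 < ϑ := hf.four_lt_theta
  have hG := integral_Gpen_le hV hf hK ha₀ ha₀eq hε hu
  rw [integral_const_mul] at hG
  have hc : 1 / 2 - 1 / ϑ = (ϑ - 2) / (2 * ϑ) := by field_simp
  have hquartic : 0 ≤ (1 / 4 - 1 / ϑ) * b * gagSq s u ^ 2 := by
    have : 0 ≤ 1 / 4 - 1 / ϑ := by
      rw [sub_nonneg]; exact one_div_le_one_div_of_le (by norm_num) hϑ.le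
    positivity
  have hgag : 0 ≤ (ϑ - 2) / (2 * ϑ) * (1 / K) * (a * gagSq s u) :=
    mul_nonneg (mul_nonneg (div_nonneg (by linarith) (by linarith)) (by positivity))
      (mul_nonneg ha (gagSq_nonneg s u))
  rw [Jeps_sub_mul_JepsD_self, hc, normEpsSq]
  linear_combination hG + hquartic + hgag

end Energy

namespace PSseq

variable {s a b ε V₁ K a₀ c : ℝ} {f : ℝ → ℝ} {Λ : Set R3} {V : R3 → ℝ} {U : ℕ → R3 → ℝ}

lemma exists_normEpsSq_le (hPS : PSseq s a b ε V₁ K a₀ f Λ V c U) {θ δ : ℝ} (hδ : 0 < δ)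
    (hN : ∀ u, 0 ≤ normEpsSq s a ε V u)
    (hcoer : ∀ u, MemHeps s ε V u →
      δ * normEpsSq s a ε V u ≤
        Jeps s a b ε V₁ K a₀ f Λ V u - θ * JepsD s a b ε V₁ K a₀ f Λ V u u) :
    ∃ M, ∀ n, normEpsSq s a ε V (U n) ≤ M := by
  obtain ⟨hU, hJ, e, he, heU⟩ := hPS
  obtain ⟨M₁, hM₁⟩ := hJ.bddAbove_range
  obtain ⟨M₂, hM₂⟩ := (by simpa using he.abs : Tendsto (fun n => |e n|) atTop (𝓝 0)).bddAbove_range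
  refine ⟨max 1 ((|M₁| + |θ| * |M₂|) / δ) ^ 2, fun n => ?_⟩
  set x := √(normEpsSq s a ε V (U n))
  have hx2 : x ^ 2 = normEpsSq s a ε V (U n) := sq_sqrt (hN _)
  have hderiv : -(θ * JepsD s a b ε V₁ K a₀ f Λ V (U n) (U n)) ≤ |θ| * M₂ * x := by
    calc -(θ * JepsD s a b ε V₁ K a₀ f Λ V (U n) (U n))
        ≤ |θ| * |JepsD s a b ε V₁ K a₀ f Λ V (U n) (U n)| := by rw [← abs_mul]; exact neg_le_abs _
      _ ≤ |θ| * (|e n| * x) := by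
        gcongr
        exact (heU n (U n) (hU n)).trans
          (mul_le_mul_of_nonneg_right (le_abs_self _) (sqrt_nonneg _))
      _ ≤ |θ| * M₂ * x := by
        rw [mul_assoc]
        gcongr
        exact hM₂ (mem_range_self n)
  have hquad : δ * x ^ 2 ≤ M₁ + |θ| * M₂ * x := by
    rw [hx2]
    linarith [hcoer _ (hU n), hM₁ (mem_range_self n)]
  rw [← hx2]
  simpa only [abs_mul, abs_abs] using
    pow_le_pow_left₀ (sqrt_nonneg _) (le_max_one_of_mul_sq_le hδ (sqrt_nonneg _) hquad) 2

end PSseq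

theorem statement_5_general
    (s a b : ℝ) (ha : 0 < a) (hb : 0 < b)
    (V : R3 → ℝ) (V₁ : ℝ) (Λ : Set R3) (V₀ : ℝ) (hV : HV V V₁ Λ V₀)
    (f : ℝ → ℝ) (q σ C₀ ϑ : ℝ) (hf : Hf s f q σ C₀ ϑ)
    (K a₀ : ℝ) (hK : 2 * ϑ / (ϑ - 2) < K) (ha₀pos : 0 < a₀)
    (ha₀eq : f a₀ + a₀ ^ (pc s - 1) = V₁ / K * a₀) :
    ∀ ε > (0:ℝ),
      (∀ u : R3 → ℝ, MemHeps s ε V u →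
        (ϑ - 2) / (2 * ϑ) * (1 - 1 / K) * normEpsSq s a ε V u ≤
          Jeps s a b ε V₁ K a₀ f Λ V u - 1 / ϑ * JepsD s a b ε V₁ K a₀ f Λ V u u) ∧
      (∀ U : ℕ → R3 → ℝ,
        PSseq s a b ε V₁ K a₀ f Λ V (cMP s a b ε V₁ K a₀ f Λ V) U →
        ∃ M : ℝ, ∀ n, normEpsSq s a ε V (U n) ≤ M) := by
  intro ε hε
  have hϑ : 4 < ϑ := hf.four_lt_theta
  have hK1 : 1 < K := lt_of_le_of_lt (by rw [le_div_iff₀ (by linarith)]; linarith) hK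
  have hcoer : ∀ u, MemHeps s ε V u →
      (ϑ - 2) / (2 * ϑ) * (1 - 1 / K) * normEpsSq s a ε V u ≤
        Jeps s a b ε V₁ K a₀ f Λ V u - 1 / ϑ * JepsD s a b ε V₁ K a₀ f Λ V u u :=
    fun u hu => mul_normEpsSq_le_Jeps_sub_JepsD ha.le hb.le hV hf (by linarith) ha₀pos ha₀eq
      hε.ne' hu
  have hδ : 0 < (ϑ - 2) / (2 * ϑ) * (1 - 1 / K) :=
    mul_pos (div_pos (by linarith) (by linarith)) (sub_pos.2 ((div_lt_one (by linarith)).2 hK1))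
  have hN : ∀ u, 0 ≤ normEpsSq s a ε V u :=
    normEpsSq_nonneg ha.le hV.nonneg_apply
  exact ⟨hcoer, fun U hPS => hPS.exists_normEpsSq_le hδ hN hcoer⟩

/-- the coercivity estimate
`J_ε(u) - (1/ϑ)⟨J'_ε(u), u⟩ ≥ ((ϑ-2)/(2ϑ))(1 - 1/K)‖u‖_ε²`, and consequently
every Palais–Smale sequence at the mountain-pass level is bounded in `H_ε`. -/
theorem statement_5
    (s a b : ℝ) (hs : s ∈ Ioo (3/4:ℝ) 1) (ha : 0 < a) (hb : 0 < b)
    (V : R3 → ℝ) (V₁ : ℝ) (Λ : Set R3) (V₀ : ℝ) (hV : HV V V₁ Λ V₀)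
    (f : ℝ → ℝ) (q σ C₀ ϑ : ℝ) (hf : Hf s f q σ C₀ ϑ)
    (K a₀ : ℝ) (hK : 2 * ϑ / (ϑ - 2) < K) (ha₀pos : 0 < a₀)
    (ha₀eq : f a₀ + a₀ ^ (pc s - 1) = V₁ / K * a₀) :
    ∀ ε > (0:ℝ),
      (∀ u : R3 → ℝ, MemHeps s ε V u →
        (ϑ - 2) / (2 * ϑ) * (1 - 1 / K) * normEpsSq s a ε V u ≤
          Jeps s a b ε V₁ K a₀ f Λ V u - 1 / ϑ * JepsD s a b ε V₁ K a₀ f Λ V u u) ∧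
      (∀ U : ℕ → R3 → ℝ,
        PSseq s a b ε V₁ K a₀ f Λ V (cMP s a b ε V₁ K a₀ f Λ V) U →
        ∃ M : ℝ, ∀ n, normEpsSq s a ε V (U n) ≤ M) :=
  statement_5_general s a b ha hb V V₁ Λ V₀ hV f q σ C₀ ϑ hf K a₀ hK ha₀pos ha₀eq
end
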